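/- arXiv:1511.01441 — 3 statements merged into one kernel-verified Lean document; each statement's English description precedes it below -/
import Mathlib

section
/- Fix integers b ≥ 2, e ≥ 1, u ≥ 1, and let g be a positive integer such that every nonnegative integer is the sum of g e-th powers of nonnegative integers. Then there exists a positive integer x with S_{e,b}(x) = u whose number of base-b digits is at most ⌊u/(b-1)^e⌋ + g; concretely, x < b^(⌊u/(b-1)^e⌋ + g). -/
/-- `S e b x` is the sum of the `e`-th powers of the base-`b` digits of `x`. -/
def S (e b x : ℕ) : ℕ := ((Nat.digits b x).map (fun a => a ^ e)).sum

/-!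
Divide `u = q (b-1)^e + r` with `r < (b-1)^e`, and write `r` as a sum of at most `g` nonzero
`e`-th powers; every base of these powers is below `b - 1`. These bases followed by `q` copies of
the digit `b - 1` form a digit list without zeros, whose `e`-th powers sum to `u`; the number `x`
with that base-`b` digit list has the required properties.
-/

theorem List.sum_map_filter_ne_zero {M : Type*} [AddMonoid M] {f : ℕ → M} (hf : f 0 = 0)
    (L : List ℕ) : ((L.filter (· ≠ 0)).map f).sum = (L.map f).sum := by
  induction L with
  | nil => rfl
  | cons a L ih => by_cases ha : a = 0 <;> simp_all

theorem Nat.digits_ofDigits_of_forall_pos_lt {b : ℕ} (hb : 1 < b) {L : List ℕ}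
    (hL : ∀ l ∈ L, 0 < l ∧ l < b) : Nat.digits b (Nat.ofDigits b L) = L :=
  Nat.digits_ofDigits b hb L (fun l hl => (hL l hl).2)
    fun h => (hL _ (L.getLast_mem h)).1.ne'

theorem exists_list_pos_lt_sum_pow {e g c r : ℕ} (he : e ≠ 0) (hr : r < c ^ e)
    (hwaring : ∃ f : Fin g → ℕ, ∑ i, f i ^ e = r) :
    ∃ L : List ℕ, L.length ≤ g ∧ (∀ l ∈ L, 0 < l ∧ l < c) ∧ (L.map (· ^ e)).sum = r := by
  obtain ⟨f, hf⟩ := hwaring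
  refine ⟨(List.ofFn f).filter (· ≠ 0), ?_, ?_, ?_⟩
  · simpa using List.length_filter_le (· ≠ 0) (List.ofFn f)
  · intro l hl
    obtain ⟨⟨i, rfl⟩, hi⟩ : (∃ i, f i = l) ∧ l ≠ 0 := by simpa using hl
    have hfi : f i ^ e ≤ r := hf ▸ Finset.single_le_sum (f := fun j => f j ^ e)
      (fun j _ => Nat.zero_le _) (Finset.mem_univ i)
    exact ⟨Nat.pos_of_ne_zero hi, lt_of_pow_lt_pow_left₀ e (Nat.zero_le _) (hfi.trans_lt hr)⟩
  · rw [List.sum_map_filter_ne_zero (f := (· ^ e)) (zero_pow he), List.map_ofFn, List.sum_ofFn]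
    exact hf

theorem exists_list_digits_sum_pow {b e u g : ℕ} (hb : 2 ≤ b) (he : e ≠ 0)
    (hwaring : ∀ m : ℕ, ∃ f : Fin g → ℕ, ∑ i, f i ^ e = m) :
    ∃ L : List ℕ, L.length ≤ u / (b - 1) ^ e + g ∧ (∀ l ∈ L, 0 < l ∧ l < b) ∧
      (L.map (· ^ e)).sum = u := by
  have hpos : 0 < (b - 1) ^ e := Nat.pow_pos (by omega)
  obtain ⟨L, hlen, hL, hsum⟩ :=
    exists_list_pos_lt_sum_pow he (Nat.mod_lt u hpos) (hwaring (u % (b - 1) ^ e))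
  refine ⟨L ++ List.replicate (u / (b - 1) ^ e) (b - 1), ?_, ?_, ?_⟩
  · simp only [List.length_append, List.length_replicate]
    omega
  · intro l hl
    rcases List.mem_append.1 hl with hl | hl
    · exact ⟨(hL l hl).1, (hL l hl).2.trans_le (Nat.sub_le b 1)⟩
    · rw [List.eq_of_mem_replicate hl]
      omega
  · simp only [List.map_append, List.sum_append, hsum, List.map_replicate, List.sum_replicate,
      smul_eq_mul]
    exact Nat.mod_add_div' u _

theorem stmt_0_general (b e u g : ℕ) (hb : 2 ≤ b) (he : 1 ≤ e) (hu : 1 ≤ u)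
    (hwaring : ∀ m : ℕ, ∃ f : Fin g → ℕ, ∑ i, (f i) ^ e = m) :
    ∃ x : ℕ, 0 < x ∧ S e b x = u ∧
      (Nat.digits b x).length ≤ u / (b - 1) ^ e + g ∧
      x < b ^ (u / (b - 1) ^ e + g) := by
  obtain ⟨L, hlen, hL, hsum⟩ := exists_list_digits_sum_pow (u := u) hb (by omega) hwaring
  have hdigits : Nat.digits b (Nat.ofDigits b L) = L := Nat.digits_ofDigits_of_forall_pos_lt hb hL
  have hL_ne : L ≠ [] := by
    rintro rfl
    simp only [List.map_nil, List.sum_nil] at hsum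
    omega
  refine ⟨Nat.ofDigits b L, ?_, by rw [S, hdigits, hsum], by rwa [hdigits], ?_⟩
  · exact Nat.pos_of_ne_zero fun h => hL_ne (by rw [← hdigits, h, Nat.digits_zero])
  · calc Nat.ofDigits b L < b ^ L.length :=
          Nat.ofDigits_lt_base_pow_length hb fun l hl => (hL l hl).2
      _ ≤ b ^ (u / (b - 1) ^ e + g) := Nat.pow_le_pow_right (by omega) hlen

theorem stmt_0 (b e u g : ℕ) (hb : 2 ≤ b) (he : 1 ≤ e) (hu : 1 ≤ u) (hg : 1 ≤ g)
    (hwaring : ∀ m : ℕ, ∃ f : Fin g → ℕ, ∑ i, (f i) ^ e = m) :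
    ∃ x : ℕ, 0 < x ∧ S e b x = u ∧
      (Nat.digits b x).length ≤ u / (b - 1) ^ e + g ∧
      x < b ^ (u / (b - 1) ^ e + g) :=
  stmt_0_general b e u g hb he hu hwaring
end

section
/- Fix integers b ≥ 2, e ≥ 1, u ≥ 1, and let g be a positive integer such that every nonnegative integer is the sum of g e-th powers of nonnegative integers. If x is the least positive integer satisfying S_{e,b}(x) = u, and n is the number of base-b digits of x, then u ≤ n·(b-1)^e and n ≤ ⌊u/(b-1)^e⌋ + g. -/
/-!
Each digit contributes at most `(b - 1) ^ e`, which gives the lower bound on the number of digits.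
For the upper bound write `u = q (b - 1) ^ e + r` with `r < (b - 1) ^ e`, and write `r` as a sum of
at most `g` positive `e`-th powers; each base of these is `< b - 1`, so these bases together with
`q` digits `b - 1` are the digits of a positive number `y` with `S e b y = u` and at most `q + g`
digits. Minimality of `x` gives `x ≤ y`, hence `x` has no more digits than `y`.
-/

lemma S_le_length_mul_pow (e : ℕ) {b : ℕ} (hb : 1 < b) (x : ℕ) :
    S e b x ≤ (Nat.digits b x).length * (b - 1) ^ e := by
  simpa [S] using List.sum_le_card_nsmul ((Nat.digits b x).map (· ^ e)) ((b - 1) ^ e) (by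
    simp only [List.mem_map]
    rintro _ ⟨d, hd, rfl⟩
    exact Nat.pow_le_pow_left (Nat.le_sub_one_of_lt (Nat.digits_lt_base hb hd)) e)

lemma Nat.digits_ofDigits_of_pos {b : ℕ} (hb : 1 < b) {L : List ℕ} (hL : ∀ d ∈ L, 0 < d ∧ d < b) :
    Nat.digits b (Nat.ofDigits b L) = L :=
  Nat.digits_ofDigits b hb L (fun d hd => (hL d hd).2)
    (fun h => (hL _ (List.getLast_mem h)).1.ne')

lemma List.sum_map_pow_filter_ne_zero {e : ℕ} (he : e ≠ 0) (l : List ℕ) :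
    ((l.filter (· ≠ 0)).map (· ^ e)).sum = (l.map (· ^ e)).sum := by
  induction l with
  | nil => rfl
  | cons d l ih =>
    rcases eq_or_ne d 0 with rfl | hd
    · simp_all [zero_pow he]
    · simp_all

lemma exists_pos_list_pow_sum {e g : ℕ} (he : e ≠ 0)
    (hwaring : ∀ m : ℕ, ∃ f : Fin g → ℕ, ∑ i, (f i) ^ e = m) (r : ℕ) :
    ∃ L : List ℕ, (∀ d ∈ L, 0 < d) ∧ (L.map (· ^ e)).sum = r ∧ L.length ≤ g := by
  obtain ⟨f, hf⟩ := hwaring r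
  refine ⟨(List.ofFn f).filter (· ≠ 0), fun d hd => ?_, ?_, ?_⟩
  · exact Nat.pos_of_ne_zero (by simpa using List.of_mem_filter hd)
  · rw [List.sum_map_pow_filter_ne_zero he, List.map_ofFn, List.sum_ofFn, ← hf]
    rfl
  · exact (List.length_filter_le _ _).trans_eq List.length_ofFn

lemma exists_pos_S_eq_digits_length_le {b e g u : ℕ} (hb : 1 < b) (he : e ≠ 0)
    (hwaring : ∀ m : ℕ, ∃ f : Fin g → ℕ, ∑ i, (f i) ^ e = m) (hu : u ≠ 0) :
    ∃ y, 0 < y ∧ S e b y = u ∧ (Nat.digits b y).length ≤ u / (b - 1) ^ e + g := by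
  set c := (b - 1) ^ e
  have hc : 0 < c := pow_pos (by omega) e
  obtain ⟨L, hL_pos, hL_sum, hL_len⟩ := exists_pos_list_pow_sum he hwaring (u % c)
  have hL_lt : ∀ d ∈ L, d < b - 1 := fun d hd =>
    lt_of_pow_lt_pow_left₀ e (Nat.zero_le _)
      (((List.le_sum_of_mem (List.mem_map_of_mem hd)).trans_eq hL_sum).trans_lt (Nat.mod_lt u hc))
  set D := L ++ List.replicate (u / c) (b - 1)
  have hD : ∀ d ∈ D, 0 < d ∧ d < b := by
    intro d hd
    rcases List.mem_append.mp hd with hd | hd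
    · exact ⟨hL_pos d hd, (hL_lt d hd).trans (by omega)⟩
    · rw [List.eq_of_mem_replicate hd]; omega
  have hdigits := Nat.digits_ofDigits_of_pos hb hD
  have hS : S e b (Nat.ofDigits b D) = u := by
    rw [S, hdigits, List.map_append, List.sum_append, hL_sum, List.map_replicate,
      List.sum_replicate, smul_eq_mul, mul_comm, Nat.mod_add_div]
  refine ⟨_, Nat.pos_of_ne_zero fun h0 => hu ?_, hS, ?_⟩
  · simp [← hS, h0, S]
  · rw [hdigits, List.length_append, List.length_replicate]
    omega

theorem stmt_1_general (b e u g x : ℕ) (hb : 2 ≤ b) (he : 1 ≤ e) (hu : 1 ≤ u)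
    (hwaring : ∀ m : ℕ, ∃ f : Fin g → ℕ, ∑ i, (f i) ^ e = m)
    (hSx : S e b x = u)
    (hmin : ∀ y : ℕ, 0 < y → S e b y = u → x ≤ y) :
    u ≤ (Nat.digits b x).length * (b - 1) ^ e ∧
      (Nat.digits b x).length ≤ u / (b - 1) ^ e + g := by
  refine ⟨hSx ▸ S_le_length_mul_pow e hb x, ?_⟩
  obtain ⟨y, hy, hSy, hy_len⟩ :=
    exists_pos_S_eq_digits_length_le hb (by omega) hwaring (by omega : u ≠ 0)
  exact (Nat.le_length_digits_le b x y (hmin y hy hSy)).trans hy_len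

theorem stmt_1 (b e u g x : ℕ) (hb : 2 ≤ b) (he : 1 ≤ e) (hu : 1 ≤ u) (hg : 1 ≤ g)
    (hwaring : ∀ m : ℕ, ∃ f : Fin g → ℕ, ∑ i, (f i) ^ e = m)
    (hx : 0 < x) (hSx : S e b x = u)
    (hmin : ∀ y : ℕ, 0 < y → S e b y = u → x ≤ y) :
    u ≤ (Nat.digits b x).length * (b - 1) ^ e ∧
      (Nat.digits b x).length ≤ u / (b - 1) ^ e + g :=
  stmt_1_general b e u g x hb he hu hwaring hSx hmin
end

section
/- Fix integers b ≥ 2, e ≥ 1, u ≥ 1, a positive integer h, and let g be a positive integer such that every nonnegative integer is the sum of g e-th powers of nonnegative integers, and let p be the least nonnegative integer with b^p > g. Suppose σ is the least height-h, u-attracted number for base b and exponent e, and suppose that σ has more than e + p base-b digits and that its digits in places 0 through e + p are all equal to b-1. Then every height-h, u-attracted number z with z ≠ σ satisfies z ≥ σ + g·(b-1)^e. -/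
/-- `x` is a height-`h`, `u`-attracted number for base `b` and exponent `e`. -/
def IsHeightAttracted (e b u h x : ℕ) : Prop :=
  0 < x ∧ (S e b)^[h] x = u ∧ ∀ n < h, (S e b)^[n] x ≠ u

theorem pow_add_one_add_mul_pow_add_one_le (c : ℕ) {e : ℕ} (he : 1 ≤ e) :
    c ^ (e + 1) + (e + 1) * c ^ e + 1 ≤ (c + 1) ^ (e + 1) := by
  induction e, he using Nat.le_induction with
  | base => exact le_of_eq (by ring)
  | succ e _ ih =>
    calc c ^ (e + 2) + (e + 2) * c ^ (e + 1) + 1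
        ≤ (c + 1) * (c ^ (e + 1) + (e + 1) * c ^ e + 1) := by
          ring_nf; nlinarith [Nat.zero_le (c ^ e)]
      _ ≤ (c + 1) * (c + 1) ^ (e + 1) := Nat.mul_le_mul_left _ ih
      _ = (c + 1) ^ (e + 2) := by ring

theorem succ_mul_pow_lt_add_one_pow (c : ℕ) {e k : ℕ} (he : 1 ≤ e) (hk : e < k) :
    (k + 1) * c ^ e < (c + 1) ^ k := by
  rcases c.eq_zero_or_pos with rfl | hc
  · simp [zero_pow (by omega : e ≠ 0)]
  induction k, hk using Nat.le_induction with
  | base =>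
    show (e + 1 + 1) * c ^ e < (c + 1) ^ (e + 1)
    have := pow_add_one_add_mul_pow_add_one_le c he
    have : c ^ e ≤ c ^ (e + 1) := Nat.pow_le_pow_right hc e.le_succ
    have : (e + 1 + 1) * c ^ e = (e + 1) * c ^ e + c ^ e := by ring
    omega
  | succ k _ ih =>
    calc (k + 1 + 1) * c ^ e ≤ 2 * (k + 1) * c ^ e := Nat.mul_le_mul_right _ (by omega)
      _ < 2 * (c + 1) ^ k := by rw [mul_assoc]; omega
      _ ≤ (c + 1) ^ (k + 1) := by rw [pow_succ']; exact Nat.mul_le_mul_right _ (by omega)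

theorem S_add_base_pow_mul {b e k r : ℕ} (hb : 1 < b) (he : 1 ≤ e) (hr : r < b ^ k) (a : ℕ) :
    S e b (r + b ^ k * a) = S e b r + S e b a := by
  rcases a.eq_zero_or_pos with rfl | ha
  · simp [S]
  have hlen : (Nat.digits b r).length ≤ k := (Nat.digits_length_le_iff hb r).2 hr
  rw [S, ← Nat.add_sub_cancel' hlen, ← Nat.digits_append_zeroes_append_digits hb ha]
  simp [S, zero_pow (by omega : e ≠ 0)]

theorem S_add_base_pow_succ_mul {b e k r : ℕ} (hb : 1 < b) (he : 1 ≤ e) (hr : r < b ^ k) (a : ℕ) :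
    S e b (r + b ^ (k + 1) * a) = S e b (r + b ^ k * a) := by
  have hr' : r < b ^ (k + 1) := hr.trans_le (Nat.pow_le_pow_right hb.le k.le_succ)
  rw [S_add_base_pow_mul hb he hr, S_add_base_pow_mul hb he hr']

theorem S_le_length_mul {b : ℕ} (hb : 1 < b) (e x : ℕ) :
    S e b x ≤ (Nat.digits b x).length * (b - 1) ^ e := by
  simpa [S, mul_comm] using List.sum_le_card_nsmul ((Nat.digits b x).map (· ^ e)) ((b - 1) ^ e) fun y hy => by
    obtain ⟨d, hd, rfl⟩ := List.mem_map.1 hy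
    exact Nat.pow_le_pow_left (Nat.le_sub_one_of_lt (Nat.digits_lt_base hb hd)) e

theorem S_lt_max {b e : ℕ} (hb : 1 < b) (he : 1 ≤ e) (x : ℕ) :
    S e b x < max x (b ^ (e + 1)) := by
  have hkey (k : ℕ) (hk : e < k) : (k + 1) * (b - 1) ^ e < b ^ k := by
    simpa [Nat.sub_add_cancel hb.le] using succ_mul_pow_lt_add_one_pow (b - 1) he hk
  have hS := S_le_length_mul hb e x
  set L := (Nat.digits b x).length
  by_cases hL : L ≤ e + 1
  · calc S e b x ≤ (e + 1 + 1) * (b - 1) ^ e := hS.trans (Nat.mul_le_mul_right _ (by omega))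
      _ < b ^ (e + 1) := hkey _ (by omega)
      _ ≤ max x (b ^ (e + 1)) := le_max_right _ _
  · have hx : b ^ (L - 1) ≤ x := by
      simpa using mt (Nat.digits_length_le_iff hb x).2 (by omega)
    calc S e b x ≤ (L - 1 + 1) * (b - 1) ^ e := by rwa [Nat.sub_add_cancel (by omega)]
      _ < b ^ (L - 1) := hkey _ (by omega)
      _ ≤ max x (b ^ (e + 1)) := hx.trans (le_max_left _ _)

theorem iterate_S_lt_max {b e : ℕ} (hb : 1 < b) (he : 1 ≤ e) (x n : ℕ) :
    (S e b)^[n + 1] x < max x (b ^ (e + 1)) := by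
  induction n with
  | zero => exact S_lt_max hb he x
  | succ n ih =>
    rw [Function.iterate_succ_apply']
    exact (S_lt_max hb he _).trans_le (max_le ih.le (le_max_right _ _))

theorem lt_of_isPeriodicPt_S {b e h u : ℕ} (hb : 1 < b) (he : 1 ≤ e) (hh : 0 < h)
    (hu : Function.IsPeriodicPt (S e b) h u) : u < b ^ (e + 1) := by
  obtain ⟨n, rfl⟩ : ∃ n, h = n + 1 := ⟨h - 1, by omega⟩
  by_contra! hbu
  have := iterate_S_lt_max hb he u n
  rw [hu.eq, max_eq_left hbu] at this
  exact this.false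

theorem IsHeightAttracted.of_S_eq {b e u h y z : ℕ} (hb : 1 < b) (he : 1 ≤ e) (hh : 0 < h)
    (hz : IsHeightAttracted e b u h z) (hS : S e b y = S e b z) (hy : b ^ (e + 1) ≤ y) :
    IsHeightAttracted e b u h y := by
  have hiter (n : ℕ) : (S e b)^[n + 1] y = (S e b)^[n + 1] z := by
    rw [Function.iterate_succ_apply, Function.iterate_succ_apply, hS]
  obtain ⟨k, rfl⟩ : ∃ k, h = k + 1 := ⟨h - 1, by omega⟩
  refine ⟨(Nat.pos_of_ne_zero (by positivity)).trans_le hy, by rw [hiter]; exact hz.2.1, ?_⟩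
  rintro (_ | n) hn
  · rintro rfl
    have hper : Function.IsPeriodicPt (S e b) (k + 1) y := (hiter k).trans hz.2.1
    exact (lt_of_isPeriodicPt_S hb he k.succ_pos hper).not_ge hy
  · rw [hiter]; exact hz.2.2 _ hn

theorem mod_pow_add_one_eq_pow_of_getD_digits {b n k : ℕ} (hb : 1 < b)
    (hdigits : ∀ i < k, (Nat.digits b n).getD i 0 = b - 1) : n % b ^ k + 1 = b ^ k := by
  induction k with
  | zero => simp [Nat.mod_one]
  | succ k ih =>
    rw [Nat.mod_pow_succ, ← Nat.getD_digits n k hb, hdigits k k.lt_succ_self]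
    have := ih fun i hi => hdigits i (hi.trans k.lt_succ_self)
    have : b ^ (k + 1) = b ^ k * (b - 1) + b ^ k := by
      rw [pow_succ, ← Nat.mul_add_one, Nat.sub_add_cancel hb.le]
    omega

theorem add_one_eq_pow_mul_of_getD_digits {b n k : ℕ} (hb : 1 < b)
    (hdigits : ∀ i < k, (Nat.digits b n).getD i 0 = b - 1) : n + 1 = b ^ k * (n / b ^ k + 1) := by
  have hmod := mod_pow_add_one_eq_pow_of_getD_digits hb hdigits
  have hdiv := Nat.div_add_mod n (b ^ k)
  rw [Nat.mul_add_one]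
  omega

theorem stmt_4_general (b e u g h p σ : ℕ) (hb : 2 ≤ b) (he : 1 ≤ e)
    (hh : 1 ≤ h)
    (hp : b ^ p > g)
    (hσmin : ∀ z : ℕ, IsHeightAttracted e b u h z → σ ≤ z)
    (hdigits : ∀ i : ℕ, i ≤ e + p → (Nat.digits b σ).getD i 0 = b - 1) :
    ∀ z : ℕ, IsHeightAttracted e b u h z → z ≠ σ → σ + g * (b - 1) ^ e ≤ z := by
  intro z hz hzσ
  by_contra! hlt
  have hσz : σ < z := (hσmin z hz).lt_of_ne' hzσ
  have hp1 : 1 ≤ p := Nat.one_le_iff_ne_zero.2 fun hp0 => by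
    rw [hp0, pow_zero, gt_iff_lt, Nat.lt_one_iff] at hp
    rw [hp, zero_mul, add_zero] at hlt
    omega
  have hgap : g * (b - 1) ^ e ≤ b ^ (e + p) :=
    calc g * (b - 1) ^ e ≤ b ^ p * b ^ e :=
          Nat.mul_le_mul hp.le (Nat.pow_le_pow_left (Nat.sub_le b 1) e)
      _ = b ^ (e + p) := by rw [← pow_add, add_comm]
  have hσ1 := add_one_eq_pow_mul_of_getD_digits (k := e + p + 1) hb fun i hi => hdigits i (by omega)
  set m := σ / b ^ (e + p + 1) + 1
  have hm1 : 1 ≤ m := Nat.le_add_left 1 _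
  set r := z - (σ + 1)
  set y := r + b ^ (e + p) * m
  have hr : r + 1 < b ^ (e + p) := by omega
  have hSy : S e b y = S e b z := by
    rw [show z = r + b ^ (e + p + 1) * m by omega, S_add_base_pow_succ_mul hb he (by omega)]
  have hyσ : y + 2 ≤ σ + 1 :=
    calc y + 2 ≤ b ^ (e + p) * (m + 1) := by rw [Nat.mul_add_one]; omega
      _ ≤ b ^ (e + p) * (b * m) := Nat.mul_le_mul_left _ (by nlinarith)
      _ = σ + 1 := by rw [hσ1, pow_succ, mul_assoc]
  have hyb : b ^ (e + 1) ≤ y :=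
    calc b ^ (e + 1) ≤ b ^ (e + p) := Nat.pow_le_pow_right (by omega) (by omega)
      _ ≤ b ^ (e + p) * m := Nat.le_mul_of_pos_right _ hm1
      _ ≤ y := Nat.le_add_left _ _
  have := hσmin y (hz.of_S_eq hb he hh hSy hyb)
  omega

theorem stmt_4 (b e u g h p σ : ℕ) (hb : 2 ≤ b) (he : 1 ≤ e) (hu : 1 ≤ u) (hg : 1 ≤ g)
    (hh : 1 ≤ h)
    (hwaring : ∀ m : ℕ, ∃ f : Fin g → ℕ, ∑ i, (f i) ^ e = m)
    (hp : b ^ p > g) (hpmin : ∀ q : ℕ, b ^ q > g → p ≤ q)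
    (hσ : IsHeightAttracted e b u h σ)
    (hσmin : ∀ z : ℕ, IsHeightAttracted e b u h z → σ ≤ z)
    (hlen : e + p < (Nat.digits b σ).length)
    (hdigits : ∀ i : ℕ, i ≤ e + p → (Nat.digits b σ).getD i 0 = b - 1) :
    ∀ z : ℕ, IsHeightAttracted e b u h z → z ≠ σ → σ + g * (b - 1) ^ e ≤ z :=
  stmt_4_general b e u g h p σ hb he hh hp hσmin hdigits
end
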